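/- arXiv:1306.0298 — 6 statements merged into one kernel-verified Lean document; each statement's English description precedes it below -/
import Mathlib

section
/- Let Q = ℝ^n, G a Lie group acting smoothly on Q, and L_d : Q × Q → ℝ a smooth discrete Lagrangian invariant under the diagonal action: L_d(g·q_0, g·q_1) = L_d(q_0, q_1) for all g ∈ G. Define the discrete momentum map J_d : Q × Q → 𝔤* by ⟨J_d(q_0,q_1), ξ⟩ = ⟨D_2 L_d(q_0,q_1), ξ_Q(q_1)⟩, where ξ_Q(q) = (d/dt)|_{t=0} exp(tξ)·q. Then along any solution (q_0,...,q_N) of the discrete Euler-Lagrange equations D_1 L_d(q_k,q_{k+1}) + D_2 L_d(q_{k-1},q_k) = 0, the momentum is conserved: J_d(q_{k-1}, q_k) = J_d(q_k, q_{k+1}) for all 1 ≤ k ≤ N-1. -/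
/-- If the discrete Lagrangian is invariant under (the one-parameter groups of)
a symmetry group acting diagonally, then the discrete momentum map
`⟨J_d(q₀,q₁), ξ⟩ = ⟨D₂L_d(q₀,q₁), ξ_Q(q₁)⟩` is conserved along solutions of the discrete
Euler-Lagrange equations.  Here a Lie algebra element `ξ` is represented by its
one-parameter group of diffeomorphisms `φ : ℝ → Q → Q`, `φ t = exp(tξ)·`, and
`ξ_Q(q) = (d/dt)|₀ φ t q` is the fundamental vector field. -/
theorem discrete_momentum_conservation
    (n N : ℕ) (Ld : (Fin n → ℝ) × (Fin n → ℝ) → ℝ) (hLd : ContDiff ℝ (⊤ : ℕ∞) Ld)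
    (φ : ℝ → (Fin n → ℝ) → (Fin n → ℝ))
    (hφ0 : φ 0 = id)
    (hφgrp : ∀ s t : ℝ, φ (s + t) = φ s ∘ φ t)
    (hφsmooth : ContDiff ℝ (⊤ : ℕ∞) (fun p : ℝ × (Fin n → ℝ) => φ p.1 p.2))
    (hinv : ∀ t : ℝ, ∀ a b : Fin n → ℝ, Ld (φ t a, φ t b) = Ld (a, b))
    (q : ℕ → Fin n → ℝ)
    (hDEL : ∀ k : ℕ, 1 ≤ k → k ≤ N - 1 →
      fderiv ℝ (fun x => Ld (x, q (k+1))) (q k)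
        + fderiv ℝ (fun y => Ld (q (k-1), y)) (q k) = 0) :
    ∀ k : ℕ, 1 ≤ k → k ≤ N - 1 →
      fderiv ℝ (fun y => Ld (q (k-1), y)) (q k)
          (deriv (fun t => φ t (q k)) 0)
        = fderiv ℝ (fun y => Ld (q k, y)) (q (k+1))
          (deriv (fun t => φ t (q (k+1))) 0) := by
  have hLdd : Differentiable ℝ Ld := hLd.differentiable (by simp)
  have hder : ∀ a : Fin n → ℝ,
      HasDerivAt (fun t => φ t a) (deriv (fun t => φ t a) 0) 0 := by
    intro a
    have hdiff : Differentiable ℝ (fun t => φ t a) := by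
      have h : ContDiff ℝ (⊤ : ℕ∞) (fun t : ℝ => φ t a) :=
        hφsmooth.comp ((contDiff_id (E := ℝ)).prodMk (contDiff_const (c := a)))
      exact h.differentiable (by simp)
    exact (hdiff 0).hasDerivAt
  have key : ∀ a b : Fin n → ℝ,
      fderiv ℝ (fun x => Ld (x, b)) a (deriv (fun t => φ t a) 0)
        + fderiv ℝ (fun y => Ld (a, y)) b (deriv (fun t => φ t b) 0) = 0 := by
    intro a b
    set da := deriv (fun t => φ t a) 0
    set db := deriv (fun t => φ t b) 0
    set D := fderiv ℝ Ld (a, b) with hD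
    have hLdf : HasFDerivAt Ld D (a, b) := (hLdd (a, b)).hasFDerivAt
    have h1 : HasFDerivAt (fun x => Ld (x, b)) (D.comp (ContinuousLinearMap.inl ℝ _ _)) a :=
      hLdf.comp a (hasFDerivAt_prodMk_left a b)
    have h2 : HasFDerivAt (fun y => Ld (a, y)) (D.comp (ContinuousLinearMap.inr ℝ _ _)) b :=
      hLdf.comp b (hasFDerivAt_prodMk_right a b)
    have hg : HasDerivAt (fun t => (φ t a, φ t b)) (da, db) 0 :=
      (hder a).prodMk (hder b)
    have hLdf' : HasFDerivAt Ld D ((fun t => (φ t a, φ t b)) 0) := by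
      simpa [hφ0] using hLdf
    have hcomp : HasDerivAt (fun t => Ld (φ t a, φ t b)) (D (da, db)) 0 :=
      hLdf'.comp_hasDerivAt 0 hg
    have hconst : (fun t => Ld (φ t a, φ t b)) = fun _ => Ld (a, b) := by
      funext t; exact hinv t a b
    have hzero : D (da, db) = 0 := by
      rw [hconst] at hcomp
      exact hcomp.unique (hasDerivAt_const 0 _)
    rw [h1.fderiv, h2.fderiv]
    have hsum : D (da, 0) + D (0, db) = D (da, db) := by
      rw [← map_add]; simp
    simpa [ContinuousLinearMap.comp_apply, hsum] using hsum.trans hzero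
  intro k hk1 hk2
  have hDELk := hDEL k hk1 hk2
  have h1 := key (q k) (q (k + 1))
  have h2 := congrArg (fun L : (Fin n → ℝ) →L[ℝ] ℝ =>
    L (deriv (fun t => φ t (q k)) 0)) hDELk
  simp only [ContinuousLinearMap.add_apply, ContinuousLinearMap.zero_apply] at h2
  linarith [h1, h2]
end

section
/- Let Q = ℝ^n and let L_d : Q^{k+1} → ℝ be a smooth higher-order discrete Lagrangian. A discrete path (q_0, ..., q_N) with N > 2k, with the boundary values (q_0,...,q_{k-1}) and (q_{N-k+1},...,q_N) fixed, is a critical point of the action A_d = Σ_{i=0}^{N-k} L_d(q_i, q_{i+1}, ..., q_{i+k}) if and only if the higher-order discrete Euler-Lagrange equations Σ_{j=1}^{k+1} D_j L_d(q_{i-j+1+k}, ..., q_{i-j+1+2k}) = 0 hold for 0 ≤ i ≤ N - 2k. -/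
open Finset

/-- Decomposition of the full derivative of a function on a pi type into its
partial derivatives. -/
lemma fderiv_pi_decomp' {ι E : Type*} [Fintype ι] [DecidableEq ι]
    [NormedAddCommGroup E] [NormedSpace ℝ E]
    {F : (ι → E) → ℝ} (hF : Differentiable ℝ F) (x v : ι → E) :
    fderiv ℝ F x v = ∑ j, fderiv ℝ (fun y => F (Function.update x j y)) (x j) (v j) := by
  have key : ∀ j : ι, fderiv ℝ (fun y => F (Function.update x j y)) (x j) (v j)
      = fderiv ℝ F x (Pi.single j (v j)) := by
    intro j
    have h1 : HasFDerivAt (fun y => F (Function.update x j y))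
        ((fderiv ℝ F x).comp
          (ContinuousLinearMap.pi (Pi.single j (ContinuousLinearMap.id ℝ E)))) (x j) := by
      have := (hF (Function.update x j (x j))).hasFDerivAt.comp (x j)
        (hasFDerivAt_update x (x j))
      rwa [Function.update_eq_self] at this
    rw [h1.fderiv]
    simp only [ContinuousLinearMap.comp_apply]
    congr 1
    ext i
    simp [ContinuousLinearMap.pi_apply, Pi.single_apply,
      apply_ite (fun f : (E →L[ℝ] E) => f (v j))]
  simp only [key]
  rw [← map_sum]
  congr 1
  ext i
  rw [Finset.sum_apply]
  simp [Pi.single_apply]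

/-- The derivative at `0` of the varied discrete action, expressed as a double sum of
partial derivatives of the discrete Lagrangian. -/
lemma action_deriv' (n N k : ℕ)
    (Ld : (Fin (k+1) → Fin n → ℝ) → ℝ) (hLd : ContDiff ℝ (⊤ : ℕ∞) Ld)
    (q δ : ℕ → Fin n → ℝ) :
    deriv (fun s : ℝ =>
        ∑ i ∈ Finset.range (N - k + 1),
          Ld (fun j : Fin (k+1) => q (i + j) + s • δ (i + j))) 0
      = ∑ i ∈ Finset.range (N - k + 1), ∑ j : Fin (k+1),
          fderiv ℝ (fun x => Ld (Function.update (fun l : Fin (k+1) => q (i + l)) j x))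
            (q (i + (j:ℕ))) (δ (i + (j:ℕ))) := by
  have hdiff : Differentiable ℝ Ld := hLd.differentiable (by simp)
  have H : ∀ i ∈ Finset.range (N - k + 1),
      HasDerivAt (fun s : ℝ => Ld (fun j : Fin (k+1) => q (i + j) + s • δ (i + j)))
        (fderiv ℝ Ld (fun j : Fin (k+1) => q (i + j)) (fun j : Fin (k+1) => δ (i + j))) 0 := by
    intro i _
    set C : Fin (k+1) → Fin n → ℝ := fun l => q (i + l) with hC
    set D : Fin (k+1) → Fin n → ℝ := fun l => δ (i + l) with hD
    have hγ : HasDerivAt (fun s : ℝ => C + s • D) D 0 := by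
      simpa using ((hasDerivAt_id (0:ℝ)).smul_const D).const_add C
    have hF := (hdiff (C + (0:ℝ) • D)).hasFDerivAt.comp_hasDerivAt 0 hγ
    simp only [zero_smul, add_zero] at hF
    exact hF
  rw [(HasDerivAt.fun_sum H).deriv]
  exact Finset.sum_congr rfl fun i _ => fderiv_pi_decomp' hdiff _ _

/-- A discrete path `(q_0,...,q_N)`, `N > 2k`, with the `k` first and `k` last
points fixed, is a critical point of the higher-order discrete action
`Σ_{i=0}^{N-k} L_d(q_i,...,q_{i+k})` iff the higher-order discrete Euler-Lagrange equations
`Σ_{j=1}^{k+1} D_j L_d(q_{i-j+1+k},...,q_{i-j+1+2k}) = 0` hold for `0 ≤ i ≤ N-2k`. -/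
theorem higher_order_discrete_euler_lagrange_iff_critical
    (n N k : ℕ) (hk : 1 ≤ k) (hN : 2 * k < N)
    (Ld : (Fin (k+1) → Fin n → ℝ) → ℝ) (hLd : ContDiff ℝ (⊤ : ℕ∞) Ld)
    (q : ℕ → Fin n → ℝ) :
    (∀ δ : ℕ → Fin n → ℝ,
      (∀ i < k, δ i = 0) → (∀ i : ℕ, N - k + 1 ≤ i → δ i = 0) →
      deriv (fun s : ℝ =>
        ∑ i ∈ Finset.range (N - k + 1),
          Ld (fun j : Fin (k+1) => q (i + j) + s • δ (i + j))) 0 = 0)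
    ↔
    (∀ i : ℕ, i ≤ N - 2 * k →
      ∑ j : Fin (k+1),
        fderiv ℝ (fun x =>
          Ld (Function.update (fun l : Fin (k+1) => q (i + k - (j:ℕ) + l)) j x))
          (q (i + k)) = 0) := by
  constructor
  · -- criticality → EL
    intro crit i hi
    refine ContinuousLinearMap.ext fun v => ?_
    simp only [ContinuousLinearMap.sum_apply, ContinuousLinearMap.zero_apply]
    set δ : ℕ → Fin n → ℝ := fun m => if m = i + k then v else 0 with hδ
    have hδ0 : ∀ m, m ≠ i + k → δ m = 0 := fun m hm => if_neg hm
    have hδ1 : δ (i + k) = v := if_pos rfl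
    have h0 : ∀ m < k, δ m = 0 := fun m hm => hδ0 m (by omega)
    have h1 : ∀ m : ℕ, N - k + 1 ≤ m → δ m = 0 := fun m hm => hδ0 m (by omega)
    have key := crit δ h0 h1
    rw [action_deriv' n N k Ld hLd q δ] at key
    rw [Finset.sum_comm] at key
    have hsingle : ∀ j : Fin (k+1),
        (∑ i' ∈ Finset.range (N - k + 1),
          fderiv ℝ (fun x => Ld (Function.update (fun l : Fin (k+1) => q (i' + l)) j x))
            (q (i' + (j:ℕ))) (δ (i' + (j:ℕ))))
        = fderiv ℝ (fun x =>
            Ld (Function.update (fun l : Fin (k+1) => q (i + k - (j:ℕ) + l)) j x))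
            (q (i + k)) v := by
      intro j
      have hjk : (j:ℕ) ≤ k := by omega
      rw [Finset.sum_eq_single (i + k - (j:ℕ))]
      · have e : i + k - (j:ℕ) + (j:ℕ) = i + k := by omega
        rw [e, hδ1]
      · intro b _ hb
        rw [hδ0 (b + (j:ℕ)) (by omega), map_zero]
      · intro h
        exact absurd (Finset.mem_range.mpr (by omega)) h
    rw [Finset.sum_congr rfl (fun j _ => hsingle j)] at key
    exact key
  · -- EL → criticality
    intro EL δ h0 h1
    rw [action_deriv' n N k Ld hLd q δ]
    rw [← Finset.sum_product']
    set T : ℕ × Fin (k+1) → ℝ := fun p =>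
      fderiv ℝ (fun x => Ld (Function.update (fun l : Fin (k+1) => q (p.1 + l)) p.2 x))
        (q (p.1 + (p.2:ℕ))) (δ (p.1 + (p.2:ℕ))) with hT
    show ∑ p ∈ Finset.range (N - k + 1) ×ˢ Finset.univ, T p = 0
    rw [← Finset.sum_filter_of_ne (p := fun p : ℕ × Fin (k+1) =>
        k ≤ p.1 + (p.2:ℕ) ∧ p.1 + (p.2:ℕ) ≤ N - k) ?hne]
    case hne =>
      intro p _ hTp
      by_contra hc
      push_neg at hc
      apply hTp
      rcases Nat.lt_or_ge (p.1 + (p.2:ℕ)) k with h | h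
      · simp only [hT]
        rw [h0 _ h, map_zero]
      · simp only [hT]
        rw [h1 _ (by omega), map_zero]
    rw [Finset.sum_nbij' (i := fun p : ℕ × Fin (k+1) => ((p.1 + (p.2:ℕ), p.2) : ℕ × Fin (k+1)))
        (j := fun p : ℕ × Fin (k+1) => ((p.1 - (p.2:ℕ), p.2) : ℕ × Fin (k+1)))
        (t := Finset.Icc k (N - k) ×ˢ Finset.univ)
        (g := fun p : ℕ × Fin (k+1) => T (p.1 - (p.2:ℕ), p.2))]
    · rw [Finset.sum_product]
      refine Finset.sum_eq_zero fun m hm => ?_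
      rw [Finset.mem_Icc] at hm
      have e : ∀ j : Fin (k+1), m - (j:ℕ) + (j:ℕ) = m := by
        intro j; have := j.is_lt; omega
      simp only [hT]
      simp only [e]
      rw [← ContinuousLinearMap.sum_apply]
      have EL' := EL (m - k) (by omega)
      have e2 : m - k + k = m := by omega
      rw [e2] at EL'
      rw [EL', ContinuousLinearMap.zero_apply]
    · intro p hp
      simp only [Finset.mem_filter, Finset.mem_product, Finset.mem_range] at hp
      simp only [Finset.mem_product, Finset.mem_Icc, Finset.mem_univ, and_true]
      omega
    · intro p hp
      simp only [Finset.mem_product, Finset.mem_Icc, Finset.mem_univ, and_true] at hp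
      have := p.2.is_lt
      simp only [Finset.mem_filter, Finset.mem_product, Finset.mem_range, Finset.mem_univ,
        true_and, and_true]
      omega
    · intro p _
      simp only [Nat.add_sub_cancel]
    · intro p hp
      simp only [Finset.mem_product, Finset.mem_Icc, Finset.mem_univ, and_true] at hp
      have := p.2.is_lt
      have : p.1 - (p.2:ℕ) + (p.2:ℕ) = p.1 := by omega
      simp only [this]
    · intro p _
      simp only [Nat.add_sub_cancel]
end

section
/- Let Q = ℝ^n, k ≥ 1, L_d : Q^{k+1} → ℝ and Φ^α_d : Q^{k+1} → ℝ (α=1,...,m) smooth, and set L̃_d(q_{(i,i+k)}, λ^i) = L_d(q_{(i,i+k)}) + λ^i_α Φ^α_d(q_{(i,i+k)}). Then for any discrete path and multipliers, the differential of the augmented action Ã_d(q_{(0,N)}, λ^{(0,N-k)}) = Σ_{i=0}^{N-k} L̃_d(q_{(i,i+k)}, λ^i) decomposes uniquely as the sum of (i) interior Euler-Lagrange terms Σ_{i=0}^{N-2k} [Σ_{j=1}^{k+1} (D_jL_d + λ^{i-j+k+1}_α D_jΦ^α_d)(q_{(i-j+1+k, i-j+1+2k)})] δq_{k+i}, (ii)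 a boundary term Θ⁺ depending on (δq_{N-2k+1},...,δq_N), (iii) minus a boundary term Θ⁻ depending on (δq_0,...,δq_{2k-1}), and (iv) the constraint terms Σ_{i=0}^{N-k} Φ^α_d(q_{(i,i+k)}) δλ^i_α. -/
open Finset

lemma hasDerivAt_line {W : Type*} [NormedAddCommGroup W] [NormedSpace ℝ W]
    {f : W → ℝ} (hf : Differentiable ℝ f) (a b : W) :
    HasDerivAt (fun s : ℝ => f (a + s • b)) (fderiv ℝ f a b) 0 := by
  have hg : HasDerivAt (fun s : ℝ => a + s • b) b 0 := by
    simpa using ((hasDerivAt_id (0 : ℝ)).smul_const b).const_add a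
  have h := (hf (a + (0:ℝ) • b)).hasFDerivAt.comp_hasDerivAt 0 hg
  rw [zero_smul, add_zero] at h
  exact h

lemma fderiv_eq_sum_partial {ι : Type*} [Fintype ι] [DecidableEq ι]
    {E : ι → Type*} [∀ i, NormedAddCommGroup (E i)] [∀ i, NormedSpace ℝ (E i)]
    (f : (∀ i, E i) → ℝ) (hf : Differentiable ℝ f) (x v : ∀ i, E i) :
    fderiv ℝ f x v = ∑ j, fderiv ℝ (fun y => f (Function.update x j y)) (x j) (v j) := by
  have hpart : ∀ j, fderiv ℝ (fun y => f (Function.update x j y)) (x j)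
      = (fderiv ℝ f x).comp
          (ContinuousLinearMap.pi (Pi.single j (ContinuousLinearMap.id ℝ (E j)))) := by
    intro j
    have h1 : HasFDerivAt (fun y => f (Function.update x j y))
        ((fderiv ℝ f x).comp
          (ContinuousLinearMap.pi (Pi.single j (ContinuousLinearMap.id ℝ (E j))))) (x j) := by
      have := ((hf (Function.update x j (x j))).hasFDerivAt).comp (x j)
        (hasFDerivAt_update x (x j))
      rw [Function.update_eq_self] at this
      exact this
    exact h1.fderiv
  have hsingle : ∀ j, (ContinuousLinearMap.pi
      (Pi.single j (ContinuousLinearMap.id ℝ (E j)))) (v j) = Pi.single j (v j) := by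
    intro j
    funext i
    by_cases h : i = j
    · subst h; simp
    · simp [Pi.single_eq_of_ne h, ContinuousLinearMap.pi_apply]
  calc fderiv ℝ f x v = fderiv ℝ f x (∑ j, Pi.single j (v j)) := by
        rw [Finset.univ_sum_single]
    _ = ∑ j, fderiv ℝ f x (Pi.single j (v j)) := map_sum _ _ _
    _ = ∑ j, fderiv ℝ (fun y => f (Function.update x j y)) (x j) (v j) := by
        refine Finset.sum_congr rfl fun j _ => ?_
        rw [hpart j, ContinuousLinearMap.comp_apply, hsingle j]

lemma window_sum_split (N k : ℕ) (hk : 1 ≤ k) (hN : 2 * k < N) (T : ℕ → Fin (k+1) → ℝ) :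
    ∑ i ∈ Finset.range (N - k + 1), ∑ j : Fin (k+1), T (i + j) j
    = (∑ i ∈ Finset.range (N - 2 * k + 1), ∑ j : Fin (k+1), T (i + k) j)
      + (∑ i ∈ Finset.Icc (N - k + 1) N, ∑ j : Fin (k+1),
          if i ≤ N - k + (j:ℕ) then T i j else 0)
      + (∑ i ∈ Finset.range k, ∑ j : Fin (k+1),
          if (j:ℕ) ≤ i then T i j else 0) := by
  have lhs_eq : ∑ i ∈ Finset.range (N - k + 1), ∑ j : Fin (k+1), T (i + j) j
      = ∑ p ∈ Finset.range (N+1), ∑ j : Fin (k+1),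
          (if (j:ℕ) ≤ p ∧ p ≤ N - k + (j:ℕ) then T p j else 0) := by
    rw [Finset.sum_comm, Finset.sum_comm (s := Finset.range (N+1))]
    refine Finset.sum_congr rfl fun j _ => ?_
    have hj : (j:ℕ) ≤ k := Nat.lt_succ_iff.mp j.isLt
    have h1 : ∑ p ∈ Finset.range (N+1),
        (if (j:ℕ) ≤ p ∧ p ≤ N - k + (j:ℕ) then T p j else 0)
        = ∑ p ∈ Finset.Ico (j:ℕ) (N - k + 1 + (j:ℕ)), T p j := by
      rw [← Finset.sum_filter]
      apply Finset.sum_congr _ fun _ _ => rfl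
      ext p
      simp only [Finset.mem_filter, Finset.mem_range, Finset.mem_Ico]
      omega
    rw [h1, Finset.sum_Ico_eq_sum_range]
    have h2 : N - k + 1 + (j:ℕ) - (j:ℕ) = N - k + 1 := by omega
    rw [h2]
    exact Finset.sum_congr rfl fun i _ => by rw [Nat.add_comm i (j:ℕ)]
  have int_eq : ∑ i ∈ Finset.range (N - 2 * k + 1), ∑ j : Fin (k+1), T (i + k) j
      = ∑ p ∈ Finset.range (N+1), ∑ j : Fin (k+1),
          (if k ≤ p ∧ p ≤ N - k then T p j else 0) := by
    have pull : ∀ p ∈ Finset.range (N+1),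
        (∑ j : Fin (k+1), if k ≤ p ∧ p ≤ N - k then T p j else 0)
        = if k ≤ p ∧ p ≤ N - k then (∑ j : Fin (k+1), T p j) else 0 := by
      intro p _; split_ifs <;> simp
    rw [Finset.sum_congr rfl pull, ← Finset.sum_filter]
    have hset : Finset.filter (fun p => k ≤ p ∧ p ≤ N - k) (Finset.range (N+1))
        = Finset.Ico k (N - 2*k + 1 + k) := by
      ext p
      simp only [Finset.mem_filter, Finset.mem_range, Finset.mem_Ico]
      omega
    rw [hset, Finset.sum_Ico_eq_sum_range]
    have h2 : N - 2*k + 1 + k - k = N - 2*k + 1 := by omega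
    rw [h2]
    exact Finset.sum_congr rfl fun i _ => by rw [Nat.add_comm i k]
  have plus_eq : (∑ i ∈ Finset.Icc (N - k + 1) N, ∑ j : Fin (k+1),
        if i ≤ N - k + (j:ℕ) then T i j else 0)
      = ∑ p ∈ Finset.range (N+1), ∑ j : Fin (k+1),
          (if (N - k + 1 ≤ p ∧ p ≤ N - k + (j:ℕ)) then T p j else 0) := by
    have pull : ∀ p ∈ Finset.range (N+1), (∑ j : Fin (k+1),
        if (N - k + 1 ≤ p ∧ p ≤ N - k + (j:ℕ)) then T p j else 0)
        = if N - k + 1 ≤ p then (∑ j : Fin (k+1),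
            if p ≤ N - k + (j:ℕ) then T p j else 0) else 0 := by
      intro p _
      by_cases h : N - k + 1 ≤ p
      · simp [h]
      · simp [h]
    rw [Finset.sum_congr rfl pull, ← Finset.sum_filter]
    apply Finset.sum_congr _ fun _ _ => rfl
    ext p
    simp only [Finset.mem_filter, Finset.mem_range, Finset.mem_Icc]
    omega
  have minus_eq : (∑ i ∈ Finset.range k, ∑ j : Fin (k+1),
        if (j:ℕ) ≤ i then T i j else 0)
      = ∑ p ∈ Finset.range (N+1), ∑ j : Fin (k+1),
          (if (p < k ∧ (j:ℕ) ≤ p) then T p j else 0) := by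
    have pull : ∀ p ∈ Finset.range (N+1), (∑ j : Fin (k+1),
        if (p < k ∧ (j:ℕ) ≤ p) then T p j else 0)
        = if p < k then (∑ j : Fin (k+1),
            if (j:ℕ) ≤ p then T p j else 0) else 0 := by
      intro p _
      by_cases h : p < k
      · simp [h]
      · simp [h]
    rw [Finset.sum_congr rfl pull, ← Finset.sum_filter]
    apply Finset.sum_congr _ fun _ _ => rfl
    ext p
    simp only [Finset.mem_filter, Finset.mem_range]
    omega
  rw [lhs_eq, int_eq, plus_eq, minus_eq, ← Finset.sum_add_distrib, ← Finset.sum_add_distrib]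
  refine Finset.sum_congr rfl fun p hp => ?_
  simp only [Finset.mem_range] at hp
  rw [← Finset.sum_add_distrib, ← Finset.sum_add_distrib]
  refine Finset.sum_congr rfl fun j _ => ?_
  have hj : (j:ℕ) ≤ k := Nat.lt_succ_iff.mp j.isLt
  split_ifs
  all_goals try ring
  all_goals exfalso
  all_goals omega

/-- The differential of the augmented higher-order discrete action decomposes
as (i) interior Euler-Lagrange terms, (ii) a boundary term `Θ⁺` (carried by the variations
`δq_i`, `N-k+1 ≤ i ≤ N`), (iii) minus a boundary term `Θ⁻` (carried by `δq_i`,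
`0 ≤ i ≤ k-1`), and (iv) constraint terms `Σ_i Φ^α_d δλ^i_α`.  Here `C i j` is the
derivative of the augmented Lagrangian `L̃_d = L_d + λ_α Φ^α_d` in its `j`-th slot for the
window starting at `i - j`, evaluated at `q_i`. -/
theorem augmented_action_differential_decomposition
    (n N k m : ℕ) (hk : 1 ≤ k) (hN : 2 * k < N)
    (Ld : (Fin (k+1) → Fin n → ℝ) → ℝ) (hLd : ContDiff ℝ (⊤ : ℕ∞) Ld)
    (Φd : Fin m → (Fin (k+1) → Fin n → ℝ) → ℝ) (hΦd : ∀ α, ContDiff ℝ (⊤ : ℕ∞) (Φd α))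
    (q : ℕ → Fin n → ℝ) (lam : ℕ → Fin m → ℝ)
    (δ : ℕ → Fin n → ℝ) (δlam : ℕ → Fin m → ℝ) :
    let C : ℕ → Fin (k+1) → (Fin n → ℝ) → ℝ := fun i j v =>
      (fderiv ℝ (fun x =>
          Ld (Function.update (fun l : Fin (k+1) => q (i - (j:ℕ) + (l:ℕ))) j x)
          + ∑ α : Fin m, lam (i - (j:ℕ)) α
              * Φd α (Function.update (fun l : Fin (k+1) => q (i - (j:ℕ) + (l:ℕ))) j x))
        (q i)) v
    deriv (fun s : ℝ =>
        ∑ i ∈ Finset.range (N - k + 1),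
          (Ld (fun l : Fin (k+1) => q (i + l) + s • δ (i + l))
            + ∑ α : Fin m, (lam i α + s * δlam i α)
                * Φd α (fun l : Fin (k+1) => q (i + l) + s • δ (i + l)))) 0
      =
      (∑ i ∈ Finset.range (N - 2 * k + 1), ∑ j : Fin (k+1), C (i + k) j (δ (i + k)))
      + (∑ i ∈ Finset.Icc (N - k + 1) N, ∑ j : Fin (k+1),
          if i ≤ N - k + (j:ℕ) then C i j (δ i) else 0)
      - (- ∑ i ∈ Finset.range k, ∑ j : Fin (k+1),
          if (j:ℕ) ≤ i then C i j (δ i) else 0)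
      + ∑ i ∈ Finset.range (N - k + 1), ∑ α : Fin m,
          Φd α (fun l : Fin (k+1) => q (i + l)) * δlam i α := by
  intro C
  have hLd' : Differentiable ℝ Ld := hLd.differentiable (by simp)
  have hΦ' : ∀ α, Differentiable ℝ (Φd α) := fun α => (hΦd α).differentiable (by simp)
  have hdiff : ∀ i : ℕ, Differentiable ℝ
      (fun x => Ld x + ∑ α : Fin m, lam i α * Φd α x) := fun i =>
    hLd'.add (Differentiable.fun_sum fun α _ => (hΦ' α).const_mul (lam i α))
  -- Step 1: compute the derivative
  have hstep1 : deriv (fun s : ℝ =>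
        ∑ i ∈ Finset.range (N - k + 1),
          (Ld (fun l : Fin (k+1) => q (i + l) + s • δ (i + l))
            + ∑ α : Fin m, (lam i α + s * δlam i α)
                * Φd α (fun l : Fin (k+1) => q (i + l) + s • δ (i + l)))) 0
      = ∑ i ∈ Finset.range (N - k + 1),
          (fderiv ℝ Ld (fun l : Fin (k+1) => q (i + l)) (fun l : Fin (k+1) => δ (i + l))
            + ∑ α : Fin m, (δlam i α * Φd α (fun l : Fin (k+1) => q (i + l))
                + lam i α * fderiv ℝ (Φd α) (fun l : Fin (k+1) => q (i + l))
                    (fun l : Fin (k+1) => δ (i + l)))) := by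
    refine HasDerivAt.deriv ?_
    refine HasDerivAt.fun_sum fun i _ => ?_
    have hL : HasDerivAt (fun s : ℝ => Ld (fun l : Fin (k+1) => q (i + l) + s • δ (i + l)))
        (fderiv ℝ Ld (fun l : Fin (k+1) => q (i + l)) (fun l : Fin (k+1) => δ (i + l))) 0 :=
      hasDerivAt_line hLd' (fun l : Fin (k+1) => q (i + l)) (fun l : Fin (k+1) => δ (i + l))
    refine hL.add (HasDerivAt.fun_sum fun α _ => ?_)
    have h1 : HasDerivAt (fun s : ℝ => lam i α + s * δlam i α) (δlam i α) 0 := by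
      simpa using ((hasDerivAt_id (0:ℝ)).mul_const (δlam i α)).const_add (lam i α)
    have h2 : HasDerivAt (fun s : ℝ => Φd α (fun l : Fin (k+1) => q (i + l) + s • δ (i + l)))
        (fderiv ℝ (Φd α) (fun l : Fin (k+1) => q (i + l)) (fun l : Fin (k+1) => δ (i + l))) 0 :=
      hasDerivAt_line (hΦ' α) (fun l : Fin (k+1) => q (i + l)) (fun l : Fin (k+1) => δ (i + l))
    simpa using h1.fun_mul h2
  -- sum rule for the fderiv of the augmented Lagrangian
  have hA : ∀ (i : ℕ) (x0 v : Fin (k+1) → Fin n → ℝ),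
      fderiv ℝ (fun x => Ld x + ∑ α : Fin m, lam i α * Φd α x) x0 v
      = fderiv ℝ Ld x0 v + ∑ α : Fin m, lam i α * fderiv ℝ (Φd α) x0 v := by
    intro i x0 v
    have h : HasFDerivAt (fun x => Ld x + ∑ α : Fin m, lam i α * Φd α x)
        (fderiv ℝ Ld x0 + ∑ α : Fin m, lam i α • fderiv ℝ (Φd α) x0) x0 :=
      (hLd' x0).hasFDerivAt.add
        (HasFDerivAt.fun_sum fun α _ => (hΦ' α x0).hasFDerivAt.const_mul (lam i α))
    rw [h.fderiv]
    simp [ContinuousLinearMap.sum_apply]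
  -- identify the partial-derivative sum with the C-terms
  have hCval : ∀ (i : ℕ) (j : Fin (k+1)) (v : Fin n → ℝ),
      C (i + (j:ℕ)) j v
      = fderiv ℝ (fun x =>
          Ld (Function.update (fun l : Fin (k+1) => q (i + (l:ℕ))) j x)
          + ∑ α : Fin m, lam i α
              * Φd α (Function.update (fun l : Fin (k+1) => q (i + (l:ℕ))) j x))
        (q (i + (j:ℕ))) v := by
    intro i j v
    show (fderiv ℝ (fun x =>
          Ld (Function.update (fun l : Fin (k+1) => q (i + (j:ℕ) - (j:ℕ) + (l:ℕ))) j x)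
          + ∑ α : Fin m, lam (i + (j:ℕ) - (j:ℕ)) α
              * Φd α (Function.update
                  (fun l : Fin (k+1) => q (i + (j:ℕ) - (j:ℕ) + (l:ℕ))) j x))
        (q (i + (j:ℕ)))) v = _
    simp only [Nat.add_sub_cancel]
  have hsum_j : ∀ i : ℕ,
      fderiv ℝ (fun x => Ld x + ∑ α : Fin m, lam i α * Φd α x)
        (fun l : Fin (k+1) => q (i + l)) (fun l : Fin (k+1) => δ (i + l))
      = ∑ j : Fin (k+1), C (i + (j:ℕ)) j (δ (i + (j:ℕ))) := by
    intro i
    rw [fderiv_eq_sum_partial _ (hdiff i)]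
    refine Finset.sum_congr rfl fun j _ => ?_
    rw [hCval i j (δ (i + (j:ℕ)))]
  -- per-term rearrangement
  have hper : ∀ i : ℕ,
      fderiv ℝ Ld (fun l : Fin (k+1) => q (i + l)) (fun l : Fin (k+1) => δ (i + l))
        + ∑ α : Fin m, (δlam i α * Φd α (fun l : Fin (k+1) => q (i + l))
            + lam i α * fderiv ℝ (Φd α) (fun l : Fin (k+1) => q (i + l))
                (fun l : Fin (k+1) => δ (i + l)))
      = (∑ j : Fin (k+1), C (i + (j:ℕ)) j (δ (i + (j:ℕ))))
        + ∑ α : Fin m, Φd α (fun l : Fin (k+1) => q (i + l)) * δlam i α := by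
    intro i
    rw [← hsum_j i, hA i]
    rw [Finset.sum_add_distrib]
    have hcomm : ∑ α : Fin m, δlam i α * Φd α (fun l : Fin (k+1) => q (i + l))
        = ∑ α : Fin m, Φd α (fun l : Fin (k+1) => q (i + l)) * δlam i α :=
      Finset.sum_congr rfl fun α _ => mul_comm _ _
    rw [hcomm]
    ring
  rw [hstep1, Finset.sum_congr rfl fun i _ => hper i, Finset.sum_add_distrib]
  rw [window_sum_split N k hk hN (fun p j => C p j (δ p))]
  ring
end

section
/- Let Q = ℝ^n and consider a time-dependent discrete Lagrangian on extended configuration space given by L_d : ℝ³ × Q³ → ℝ together with the fixed-timestep constraints Φ^{(1)}_d(t_0,t_1,t_2,q_0,q_1,q_2) = t_1 - t_0 - h and Φ^{(2)}_d = t_2 - t_1 - h with h > 0. Then the constrained discrete Euler-Lagrange equations for the augmented Lagrangian L̃_d = L_d + λ_1 Φ^{(1)}_d + λ_2 Φ^{(2)}_d decouple: the q-equations reduce to D_4 L_d(t_k, t_k+h, t_k+2h, q_k, q_{k+1}, q_{k+2}) + D_5 L_d(t_k-h, t_k, t_k+h, q_{k-1}, q_k, q_{k+1}) + D_6 L_d(t_k-2h,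 t_k-h, t_k, q_{k-2}, q_{k-1}, q_k) = 0 for 2 ≤ k ≤ N-2, which contain no Lagrange multipliers, and for any solution of the q-equations the t-equations can be solved for the multipliers λ_1^k, λ_2^k. -/
/-- For a time-dependent discrete Lagrangian with the fixed-timestep
constraints `t_{i+1} - t_i = h`, the constrained discrete Euler-Lagrange equations for the
augmented Lagrangian decouple: they hold for some multipliers iff the timestep constraints
hold and the `q`-equations
`D₄L_d(t_k,t_k+h,t_k+2h,q_k,q_{k+1},q_{k+2}) + D₅L_d(t_k-h,t_k,t_k+h,q_{k-1},q_k,q_{k+1})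
  + D₆L_d(t_k-2h,t_k-h,t_k,q_{k-2},q_{k-1},q_k) = 0`
(which contain no multipliers) hold; the `t`-equations merely determine the multipliers. -/
theorem fixed_timestep_decoupling
    (n N : ℕ) (hN : 4 ≤ N) (h : ℝ) (hh : 0 < h)
    (L : ℝ → ℝ → ℝ → (Fin n → ℝ) → (Fin n → ℝ) → (Fin n → ℝ) → ℝ)
    (hL : ContDiff ℝ (⊤ : ℕ∞) (fun p : (ℝ × ℝ × ℝ) × (Fin n → ℝ) × (Fin n → ℝ) × (Fin n → ℝ) =>
      L p.1.1 p.1.2.1 p.1.2.2 p.2.1 p.2.2.1 p.2.2.2))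
    (t : ℕ → ℝ) (q : ℕ → Fin n → ℝ) :
    (∃ lam1 lam2 : ℕ → ℝ,
      (∀ i : ℕ, i ≤ N - 1 → t (i+1) = t i + h) ∧
      (∀ k : ℕ, 2 ≤ k → k ≤ N - 2 →
        -- q-equations of the augmented system
        ((t (k+2) - t k) •
            fderiv ℝ (fun x => L (t k) (t (k+1)) (t (k+2)) x (q (k+1)) (q (k+2))) (q k)
          + (t (k+1) - t (k-1)) •
            fderiv ℝ (fun x => L (t (k-1)) (t k) (t (k+1)) (q (k-1)) x (q (k+1))) (q k)
          + (t k - t (k-2)) •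
            fderiv ℝ (fun x => L (t (k-2)) (t (k-1)) (t k) (q (k-2)) (q (k-1)) x) (q k)
          = 0)
        ∧
        -- t-equations of the augmented system (containing the multipliers)
        (0 = (t (k+2) - t k) *
              deriv (fun x => L x (t (k+1)) (t (k+2)) (q k) (q (k+1)) (q (k+2))) (t k)
          + L (t (k-2)) (t (k-1)) (t k) (q (k-2)) (q (k-1)) (q k)
          + (t (k+1) - t (k-1)) *
              deriv (fun x => L (t (k-1)) x (t (k+1)) (q (k-1)) (q k) (q (k+1))) (t k)
          + lam1 (k-1) - lam2 (k-1) + lam2 (k-2) - lam1 k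
          + (t k - t (k-2)) *
              deriv (fun x => L (t (k-2)) (t (k-1)) x (q (k-2)) (q (k-1)) (q k)) (t k)
          - L (t k) (t (k+1)) (t (k+2)) (q k) (q (k+1)) (q (k+2)))))
    ↔
    ((∀ i : ℕ, i ≤ N - 1 → t (i+1) = t i + h) ∧
      (∀ k : ℕ, 2 ≤ k → k ≤ N - 2 →
        fderiv ℝ (fun x => L (t k) (t k + h) (t k + 2*h) x (q (k+1)) (q (k+2))) (q k)
          + fderiv ℝ (fun x => L (t k - h) (t k) (t k + h) (q (k-1)) x (q (k+1))) (q k)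
          + fderiv ℝ (fun x => L (t k - 2*h) (t k - h) (t k) (q (k-2)) (q (k-1)) x) (q k)
          = 0)) := by
  constructor
  · rintro ⟨lam1, lam2, hc, heq⟩
    refine ⟨hc, ?_⟩
    intro k hk2 hkN
    obtain ⟨m, rfl⟩ : ∃ m, k = m + 2 := ⟨k - 2, by omega⟩
    have e1 : t (m+1) = t m + h := hc m (by omega)
    have e2 : t (m+2) = t (m+1) + h := hc (m+1) (by omega)
    have e3 : t (m+3) = t (m+2) + h := hc (m+2) (by omega)
    have e4 : t (m+4) = t (m+3) + h := hc (m+3) (by omega)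
    have f1 : t (m+3) = t (m+2) + h := e3
    have f2 : t (m+4) = t (m+2) + 2*h := by rw [e4, e3]; ring
    have f3 : t (m+1) = t (m+2) - h := by rw [e2]; ring
    have f4 : t m = t (m+2) - 2*h := by rw [e2, e1]; ring
    have hq := (heq (m+2) (by omega) (by omega)).1
    simp only [show m+2-1 = m+1 from rfl, show m+2-2 = m from rfl] at hq ⊢
    rw [f1, f2, f3, f4] at hq
    have hco : t (m+2) + 2*h - t (m+2) = 2*h := by ring
    have hco2 : t (m+2) + h - (t (m+2) - h) = 2*h := by ring
    have hco3 : t (m+2) - (t (m+2) - 2*h) = 2*h := by ring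
    rw [hco, hco2, hco3, ← smul_add, ← smul_add, smul_eq_zero] at hq
    rcases hq with hq | hq
    · exact absurd hq (by positivity)
    · exact hq
  · rintro ⟨hc, heq⟩
    set G : ℕ → ℝ := fun k =>
      (t (k+2) - t k) *
          deriv (fun x => L x (t (k+1)) (t (k+2)) (q k) (q (k+1)) (q (k+2))) (t k)
        + L (t (k-2)) (t (k-1)) (t k) (q (k-2)) (q (k-1)) (q k)
        + (t (k+1) - t (k-1)) *
            deriv (fun x => L (t (k-1)) x (t (k+1)) (q (k-1)) (q k) (q (k+1))) (t k)
        + (t k - t (k-2)) *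
            deriv (fun x => L (t (k-2)) (t (k-1)) x (q (k-2)) (q (k-1)) (q k)) (t k)
        - L (t k) (t (k+1)) (t (k+2)) (q k) (q (k+1)) (q (k+2)) with hG
    refine ⟨fun k => ∑ j ∈ Finset.range k, G (j+1), fun _ => 0, hc, ?_⟩
    intro k hk2 hkN
    obtain ⟨m, rfl⟩ : ∃ m, k = m + 2 := ⟨k - 2, by omega⟩
    have e1 : t (m+1) = t m + h := hc m (by omega)
    have e2 : t (m+2) = t (m+1) + h := hc (m+1) (by omega)
    have e3 : t (m+3) = t (m+2) + h := hc (m+2) (by omega)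
    have e4 : t (m+4) = t (m+3) + h := hc (m+3) (by omega)
    have f1 : t (m+3) = t (m+2) + h := e3
    have f2 : t (m+4) = t (m+2) + 2*h := by rw [e4, e3]; ring
    have f3 : t (m+1) = t (m+2) - h := by rw [e2]; ring
    have f4 : t m = t (m+2) - 2*h := by rw [e2, e1]; ring
    have hq := heq (m+2) (by omega) (by omega)
    simp only [show m+2-1 = m+1 from rfl, show m+2-2 = m from rfl] at hq ⊢
    constructor
    · rw [f1, f2, f3, f4]
      have hco : t (m+2) + 2*h - t (m+2) = 2*h := by ring
      have hco2 : t (m+2) + h - (t (m+2) - h) = 2*h := by ring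
      have hco3 : t (m+2) - (t (m+2) - 2*h) = 2*h := by ring
      rw [hco, hco2, hco3, ← smul_add, ← smul_add, hq, smul_zero]
    · have hsum : ∑ j ∈ Finset.range (m+2), G (j+1)
          = (∑ j ∈ Finset.range (m+1), G (j+1)) + G (m+2) := by
        rw [Finset.sum_range_succ]
      rw [hsum, hG]
      simp only [show m+2-1 = m+1 from rfl, show m+2-2 = m from rfl]
      ring
end

section
/- Let Q = ℝ^n, G a Lie group acting on Q, extended diagonally to Q^{2k} and trivially to Q^{2k} × ℝ^{km}. Suppose the discrete Lagrangian L_d : Q^{k+1} → ℝ and the constraints Φ^α_d : Q^{k+1} → ℝ are G-invariant under the diagonal action. Then the two higher-order discrete momentum maps J⁺_d and J⁻_d, defined by ⟨J^±_d(q_{(i,i+2k-1)}, λ^{(i,i+k-1)}), ξ⟩ = ⟨Θ^±_{L̃_d}(q_{(i,i+2k-1)}, λ^{(i,i+k-1)}), ξ_{Q^{2k}}(q_{(i,i+2k-1)})⟩, coincide: J⁺_d = J⁻_d on solutions of the constrained higher-order discrete Euler-Lagrange equations, and the common momentum map J_d is preserved by the discrete flow Υ_d. -/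
open Finset

/-- Decomposition of the `fderiv` of a function on a pi-type applied to a vector
as the sum of its partial derivatives. -/
lemma fderiv_apply_pi_sum {ι : Type*} [Fintype ι] [DecidableEq ι]
    {E : Type*} [NormedAddCommGroup E] [NormedSpace ℝ E]
    (F : (ι → E) → ℝ) (p : ι → E) (hF : DifferentiableAt ℝ F p) (v : ι → E) :
    fderiv ℝ F p v = ∑ j, fderiv ℝ (fun x => F (Function.update p j x)) (p j) (v j) := by
  have hsingle : ∀ j : ι, ∀ y : E,
      fderiv ℝ (fun x => F (Function.update p j x)) (p j) y = fderiv ℝ F p (Pi.single j y) := by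
    intro j y
    have hU : HasFDerivAt (Function.update p j)
        (ContinuousLinearMap.pi (Pi.single j (ContinuousLinearMap.id ℝ E))) (p j) :=
      hasFDerivAt_update p (p j)
    have hF' : HasFDerivAt F (fderiv ℝ F p) (Function.update p j (p j)) := by
      rw [Function.update_eq_self]; exact hF.hasFDerivAt
    have hcomp : HasFDerivAt (fun x => F (Function.update p j x))
        ((fderiv ℝ F p).comp (ContinuousLinearMap.pi (Pi.single j (ContinuousLinearMap.id ℝ E))))
        (p j) := hF'.comp (p j) hU
    rw [hcomp.fderiv]
    simp only [ContinuousLinearMap.coe_comp', Function.comp_apply]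
    congr 1
    ext l
    by_cases h : l = j <;> simp [h, Pi.single, Function.update]
  calc fderiv ℝ F p v = fderiv ℝ F p (∑ j, Pi.single j (v j)) := by
        rw [Finset.univ_sum_single]
    _ = ∑ j, fderiv ℝ F p (Pi.single j (v j)) := map_sum _ _ _
    _ = ∑ j, fderiv ℝ (fun x => F (Function.update p j x)) (p j) (v j) := by
        simp_rw [hsingle]

/-- Differentiating a symmetry invariance along the one-parameter group gives that the
derivative of the invariant function vanishes on the fundamental vector field. -/
lemma invariance_fderiv_zero {N n : ℕ}
    (φ : ℝ → (Fin n → ℝ) → (Fin n → ℝ)) (hφ0 : φ 0 = id)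
    (hφsmooth : ContDiff ℝ (⊤ : ℕ∞) (fun p : ℝ × (Fin n → ℝ) => φ p.1 p.2))
    (F : (Fin N → Fin n → ℝ) → ℝ) (p : Fin N → Fin n → ℝ)
    (hF : DifferentiableAt ℝ F p)
    (hinv : ∀ τ (w : Fin N → Fin n → ℝ), F (fun l => φ τ (w l)) = F w) :
    fderiv ℝ F p (fun l => deriv (fun τ => φ τ (p l)) 0) = 0 := by
  set γ : ℝ → (Fin N → Fin n → ℝ) := fun τ l => φ τ (p l) with hγ
  have hcurve : ∀ x : Fin n → ℝ, DifferentiableAt ℝ (fun τ => φ τ x) 0 := by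
    intro x
    have : ContDiff ℝ (⊤ : ℕ∞) (fun τ : ℝ => φ τ x) :=
      hφsmooth.comp (contDiff_id.prodMk contDiff_const)
    exact (this.differentiable (by simp)).differentiableAt
  have hγdiff : HasDerivAt γ (fun l => deriv (fun τ => φ τ (p l)) 0) 0 :=
    hasDerivAt_pi.2 fun l => (hcurve (p l)).hasDerivAt
  have hγ0 : γ 0 = p := by funext l; simp [hγ, hφ0]
  have hFat : HasFDerivAt F (fderiv ℝ F p) (γ 0) := by rw [hγ0]; exact hF.hasFDerivAt
  have hcomp : HasDerivAt (fun τ => F (γ τ))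
      (fderiv ℝ F p (fun l => deriv (fun τ => φ τ (p l)) 0)) 0 :=
    hFat.comp_hasDerivAt 0 hγdiff
  have hconst : (fun τ => F (γ τ)) = fun _ => F p := by
    funext τ; exact hinv τ p
  rw [hconst] at hcomp
  exact hcomp.unique (hasDerivAt_const 0 (F p))

/-- If the higher-order discrete Lagrangian and constraints are invariant
under (the one-parameter groups of) a symmetry group acting diagonally, then the two
higher-order discrete momentum maps `J⁺_d` and `J⁻_d` (pairings of the discrete
Poincaré–Cartan 1-forms `Θ±` of the augmented Lagrangian with the fundamental vector field
`ξ_{Q^{2k}}`) coincide, and the common momentum map is preserved by the discrete flow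
(which shifts the window index by one along solutions of the constrained higher-order
discrete Euler-Lagrange equations). -/
theorem higher_order_discrete_momentum_preservation
    (n k m : ℕ) (hk : 1 ≤ k)
    (Ld : (Fin (k+1) → Fin n → ℝ) → ℝ) (hLd : ContDiff ℝ (⊤ : ℕ∞) Ld)
    (Φd : Fin m → (Fin (k+1) → Fin n → ℝ) → ℝ) (hΦd : ∀ α, ContDiff ℝ (⊤ : ℕ∞) (Φd α))
    (φ : ℝ → (Fin n → ℝ) → (Fin n → ℝ))
    (hφ0 : φ 0 = id)
    (hφgrp : ∀ s t : ℝ, φ (s + t) = φ s ∘ φ t)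
    (hφsmooth : ContDiff ℝ (⊤ : ℕ∞) (fun p : ℝ × (Fin n → ℝ) => φ p.1 p.2))
    (hinvL : ∀ (τ : ℝ) (w : Fin (k+1) → Fin n → ℝ), Ld (fun l => φ τ (w l)) = Ld w)
    (hinvΦ : ∀ (α : Fin m) (τ : ℝ) (w : Fin (k+1) → Fin n → ℝ),
      Φd α (fun l => φ τ (w l)) = Φd α w)
    (q : ℕ → Fin n → ℝ) (lam : ℕ → Fin m → ℝ)
    -- constrained higher-order discrete Euler-Lagrange equations along the path
    (hDEL : ∀ i : ℕ,
      ∑ j : Fin (k+1),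
        fderiv ℝ (fun x =>
          Ld (Function.update (fun l : Fin (k+1) => q (i + k - (j:ℕ) + (l:ℕ))) j x)
          + ∑ α : Fin m, lam (i + k - (j:ℕ)) α
              * Φd α (Function.update
                  (fun l : Fin (k+1) => q (i + k - (j:ℕ) + (l:ℕ))) j x))
          (q (i + k)) = 0)
    (hcons : ∀ (i : ℕ) (α : Fin m), Φd α (fun l : Fin (k+1) => q (i + l)) = 0) :
    let ξQ : (Fin n → ℝ) → (Fin n → ℝ) := fun x => deriv (fun τ => φ τ x) 0
    let C : ℕ → Fin (k+1) → (Fin n → ℝ) → ℝ := fun i j v =>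
      (fderiv ℝ (fun x =>
          Ld (Function.update (fun l : Fin (k+1) => q (i - (j:ℕ) + (l:ℕ))) j x)
          + ∑ α : Fin m, lam (i - (j:ℕ)) α
              * Φd α (Function.update
                  (fun l : Fin (k+1) => q (i - (j:ℕ) + (l:ℕ))) j x))
        (q i)) v
    let Jm : ℕ → ℝ := fun i =>
      - ∑ s ∈ Finset.range k, ∑ j : Fin (k+1),
          if (j:ℕ) ≤ s then C (i + s) j (ξQ (q (i + s))) else 0
    let Jp : ℕ → ℝ := fun i =>
      ∑ s ∈ Finset.Icc k (2 * k - 1), ∑ j : Fin (k+1),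
          if s ≤ k - 1 + (j:ℕ) then C (i + s) j (ξQ (q (i + s))) else 0
    (∀ i : ℕ, Jp i = Jm i) ∧ (∀ i : ℕ, Jm (i + 1) = Jm i) := by
  intro ξQ C Jm Jp
  -- differentiability of the augmented Lagrangian
  have hFdiff : ∀ b : ℕ,
      Differentiable ℝ (fun ww : Fin (k+1) → Fin n → ℝ =>
        Ld ww + ∑ α : Fin m, lam b α * Φd α ww) := by
    intro b
    exact (hLd.add (ContDiff.sum fun α _ => contDiff_const.mul (hΦd α))).differentiable (by simp)
  -- the invariance identity: the "diagonal" sums vanish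
  have hI : ∀ b : ℕ, ∑ j : Fin (k+1), C (b + (j:ℕ)) j (ξQ (q (b + (j:ℕ)))) = 0 := by
    intro b
    set F : (Fin (k+1) → Fin n → ℝ) → ℝ :=
      fun ww => Ld ww + ∑ α : Fin m, lam b α * Φd α ww with hFdef
    set w : Fin (k+1) → Fin n → ℝ := fun l => q (b + (l:ℕ)) with hwdef
    have hstep : ∀ j : Fin (k+1), C (b + (j:ℕ)) j (ξQ (q (b + (j:ℕ)))) =
        fderiv ℝ (fun x => F (Function.update w j x)) (w j) (ξQ (w j)) := by
      intro j
      show (fderiv ℝ (fun x =>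
          Ld (Function.update (fun l : Fin (k+1) => q (b + (j:ℕ) - (j:ℕ) + (l:ℕ))) j x)
          + ∑ α : Fin m, lam (b + (j:ℕ) - (j:ℕ)) α
              * Φd α (Function.update
                  (fun l : Fin (k+1) => q (b + (j:ℕ) - (j:ℕ) + (l:ℕ))) j x))
        (q (b + (j:ℕ)))) (ξQ (q (b + (j:ℕ)))) = _
      simp only [Nat.add_sub_cancel]
      rfl
    rw [Finset.sum_congr rfl fun j _ => hstep j]
    rw [← fderiv_apply_pi_sum F w ((hFdiff b) w) (fun l => ξQ (w l))]
    have hinvF : ∀ τ (w' : Fin (k+1) → Fin n → ℝ), F (fun l => φ τ (w' l)) = F w' := by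
      intro τ w'
      simp only [hFdef, hinvL τ w', hinvΦ _ τ w']
    exact invariance_fderiv_zero φ hφ0 hφsmooth F w (hFdiff b w) hinvF
  -- the discrete Euler–Lagrange identity: "column" sums vanish
  have hE : ∀ (i : ℕ) (v : Fin n → ℝ), ∑ j : Fin (k+1), C (i + k) j v = 0 := by
    intro i v
    have h0 : (∑ j : Fin (k+1),
        fderiv ℝ (fun x =>
          Ld (Function.update (fun l : Fin (k+1) => q (i + k - (j:ℕ) + (l:ℕ))) j x)
          + ∑ α : Fin m, lam (i + k - (j:ℕ)) α
              * Φd α (Function.update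
                  (fun l : Fin (k+1) => q (i + k - (j:ℕ) + (l:ℕ))) j x))
          (q (i + k))) v = 0 := by
      rw [hDEL i]; rfl
    rw [ContinuousLinearMap.sum_apply] at h0
    exact h0
  -- rewriting the if-sums as interval sums
  have hm : ∀ (i : ℕ) (j : Fin (k+1)),
      (∑ s ∈ Finset.range k, if (j:ℕ) ≤ s then C (i + s) j (ξQ (q (i + s))) else 0)
        = ∑ s ∈ Finset.Ico (j:ℕ) k, C (i + s) j (ξQ (q (i + s))) := by
    intro i j
    rw [← Finset.sum_filter]
    refine Finset.sum_congr ?_ fun _ _ => rfl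
    ext s
    simp only [Finset.mem_filter, Finset.mem_range, Finset.mem_Ico]
    omega
  have hp : ∀ (i : ℕ) (j : Fin (k+1)),
      (∑ s ∈ Finset.Icc k (2 * k - 1), if s ≤ k - 1 + (j:ℕ) then C (i + s) j (ξQ (q (i + s))) else 0)
        = ∑ s ∈ Finset.Ico k (k + (j:ℕ)), C (i + s) j (ξQ (q (i + s))) := by
    intro i j
    have hj : (j:ℕ) < k + 1 := j.isLt
    rw [← Finset.sum_filter]
    refine Finset.sum_congr ?_ fun _ _ => rfl
    ext s
    simp only [Finset.mem_filter, Finset.mem_Icc, Finset.mem_Ico]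
    omega
  -- Part 1 : J⁺ = J⁻
  have part1 : ∀ i : ℕ, Jp i = Jm i := by
    intro i
    have hJp : Jp i = ∑ j : Fin (k+1), ∑ s ∈ Finset.Ico k (k + (j:ℕ)),
        C (i + s) j (ξQ (q (i + s))) := by
      show (∑ s ∈ Finset.Icc k (2 * k - 1), ∑ j : Fin (k+1),
          if s ≤ k - 1 + (j:ℕ) then C (i + s) j (ξQ (q (i + s))) else 0) = _
      rw [Finset.sum_comm]
      exact Finset.sum_congr rfl fun j _ => hp i j
    have hJm' : (∑ s ∈ Finset.range k, ∑ j : Fin (k+1),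
        if (j:ℕ) ≤ s then C (i + s) j (ξQ (q (i + s))) else 0)
        = ∑ j : Fin (k+1), ∑ s ∈ Finset.Ico (j:ℕ) k, C (i + s) j (ξQ (q (i + s))) := by
      rw [Finset.sum_comm]
      exact Finset.sum_congr rfl fun j _ => hm i j
    have hjoin : ∀ j : Fin (k+1),
        (∑ s ∈ Finset.Ico k (k + (j:ℕ)), C (i + s) j (ξQ (q (i + s))))
          + ∑ s ∈ Finset.Ico (j:ℕ) k, C (i + s) j (ξQ (q (i + s)))
        = ∑ b ∈ Finset.range k, C (i + b + (j:ℕ)) j (ξQ (q (i + b + (j:ℕ)))) := by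
      intro j
      have hj : (j:ℕ) ≤ k := Nat.lt_succ_iff.mp j.isLt
      rw [add_comm, Finset.sum_Ico_consecutive _ hj (Nat.le_add_right k (j:ℕ)),
        Finset.sum_Ico_eq_sum_range]
      rw [Nat.add_sub_cancel]
      refine Finset.sum_congr rfl fun b _ => ?_
      rw [show i + ((j:ℕ) + b) = i + b + (j:ℕ) by omega]
    have hsum : Jp i + (∑ s ∈ Finset.range k, ∑ j : Fin (k+1),
        if (j:ℕ) ≤ s then C (i + s) j (ξQ (q (i + s))) else 0) = 0 := by
      rw [hJp, hJm', ← Finset.sum_add_distrib,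
        Finset.sum_congr rfl fun j _ => hjoin j, Finset.sum_comm]
      exact Finset.sum_eq_zero fun b _ => hI (i + b)
    show Jp i = -∑ s ∈ Finset.range k, ∑ j : Fin (k+1),
        if (j:ℕ) ≤ s then C (i + s) j (ξQ (q (i + s))) else 0
    linarith [hsum]
  refine ⟨part1, ?_⟩
  -- Part 2 : conservation of the momentum map along the discrete flow
  intro i
  have key2 : ∀ j : Fin (k+1),
      (∑ s ∈ Finset.Ico (j:ℕ) k, C (i + 1 + s) j (ξQ (q (i + 1 + s))))
        + C (i + (j:ℕ)) j (ξQ (q (i + (j:ℕ))))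
      = (∑ s ∈ Finset.Ico (j:ℕ) k, C (i + s) j (ξQ (q (i + s))))
        + C (i + k) j (ξQ (q (i + k))) := by
    intro j
    have hj : (j:ℕ) ≤ k := Nat.lt_succ_iff.mp j.isLt
    rw [Finset.sum_Ico_eq_sum_range, Finset.sum_Ico_eq_sum_range]
    have e1 : (∑ b ∈ Finset.range (k - (j:ℕ)),
        C (i + 1 + ((j:ℕ) + b)) j (ξQ (q (i + 1 + ((j:ℕ) + b)))))
        = ∑ b ∈ Finset.range (k - (j:ℕ)),
          C (i + (j:ℕ) + (b + 1)) j (ξQ (q (i + (j:ℕ) + (b + 1)))) := by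
      refine Finset.sum_congr rfl fun b _ => ?_
      rw [show i + 1 + ((j:ℕ) + b) = i + (j:ℕ) + (b + 1) by omega]
    have e3 : (∑ b ∈ Finset.range (k - (j:ℕ)),
        C (i + ((j:ℕ) + b)) j (ξQ (q (i + ((j:ℕ) + b)))))
        = ∑ b ∈ Finset.range (k - (j:ℕ)),
          C (i + (j:ℕ) + b) j (ξQ (q (i + (j:ℕ) + b))) := by
      refine Finset.sum_congr rfl fun b _ => ?_
      rw [show i + ((j:ℕ) + b) = i + (j:ℕ) + b by omega]
    rw [e1, e3]
    have e2 : C (i + (j:ℕ)) j (ξQ (q (i + (j:ℕ))))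
        = C (i + (j:ℕ) + 0) j (ξQ (q (i + (j:ℕ) + 0))) := by norm_num
    have e4 : C (i + k) j (ξQ (q (i + k)))
        = C (i + (j:ℕ) + (k - (j:ℕ))) j (ξQ (q (i + (j:ℕ) + (k - (j:ℕ))))) := by
      rw [show i + (j:ℕ) + (k - (j:ℕ)) = i + k by omega]
    rw [e2, e4]
    rw [← Finset.sum_range_succ' (fun b => C (i + (j:ℕ) + b) j (ξQ (q (i + (j:ℕ) + b)))) (k - (j:ℕ)),
      ← Finset.sum_range_succ (fun b => C (i + (j:ℕ) + b) j (ξQ (q (i + (j:ℕ) + b)))) (k - (j:ℕ))]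
  -- now conclude
  show (-∑ s ∈ Finset.range k, ∑ j : Fin (k+1),
      if (j:ℕ) ≤ s then C (i + 1 + s) j (ξQ (q (i + 1 + s))) else 0)
    = -∑ s ∈ Finset.range k, ∑ j : Fin (k+1),
      if (j:ℕ) ≤ s then C (i + s) j (ξQ (q (i + s))) else 0
  have hL : (∑ s ∈ Finset.range k, ∑ j : Fin (k+1),
      if (j:ℕ) ≤ s then C (i + 1 + s) j (ξQ (q (i + 1 + s))) else 0)
      = ∑ j : Fin (k+1), ∑ s ∈ Finset.Ico (j:ℕ) k, C (i + 1 + s) j (ξQ (q (i + 1 + s))) := by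
    rw [Finset.sum_comm]
    exact Finset.sum_congr rfl fun j _ => hm (i + 1) j
  have hR : (∑ s ∈ Finset.range k, ∑ j : Fin (k+1),
      if (j:ℕ) ≤ s then C (i + s) j (ξQ (q (i + s))) else 0)
      = ∑ j : Fin (k+1), ∑ s ∈ Finset.Ico (j:ℕ) k, C (i + s) j (ξQ (q (i + s))) := by
    rw [Finset.sum_comm]
    exact Finset.sum_congr rfl fun j _ => hm i j
  rw [hL, hR, neg_inj, ← sub_eq_zero, ← Finset.sum_sub_distrib]
  have hdiff : ∀ j : Fin (k+1),
      (∑ s ∈ Finset.Ico (j:ℕ) k, C (i + 1 + s) j (ξQ (q (i + 1 + s))))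
        - ∑ s ∈ Finset.Ico (j:ℕ) k, C (i + s) j (ξQ (q (i + s)))
      = C (i + k) j (ξQ (q (i + k))) - C (i + (j:ℕ)) j (ξQ (q (i + (j:ℕ)))) := by
    intro j
    linarith [key2 j]
  rw [Finset.sum_congr rfl fun j _ => hdiff j, Finset.sum_sub_distrib,
    hE i (ξQ (q (i + k))), hI i, sub_zero]
end

section
/- Let Q = ℝ^n, L_d : Q × Q → ℝ smooth with D_{12}L_d everywhere invertible, and let Υ_d be the (local) discrete flow defined by the discrete Euler-Lagrange equations. Define the discrete Poincaré–Cartan 1-forms Θ⁻_{L_d} = -D_1L_d(q_0,q_1) dq_0 and Θ⁺_{L_d} = D_2L_d(q_0,q_1) dq_1 on Q × Q, and Ω_d = dΘ⁺_{L_d} = dΘ⁻_{L_d} + d(dL_d) = dΘ⁻_{L_d}. Then the discrete flow is symplectic: Υ_d* Ω_d = Ω_d. -/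
/-- The (local) discrete flow `Υ_d(q₀,q₁) = (q₁, q₂)` determined by the
discrete Euler-Lagrange equations of a regular discrete Lagrangian is symplectic:
`Υ_d* Ω_d = Ω_d`, where `Ω_d = dΘ⁺ = dΘ⁻` is the discrete Poincaré–Cartan 2-form, the
1-forms being `Θ⁻ = -D₁L_d dq₀`, `Θ⁺ = D₂L_d dq₁` and the exterior derivative being
expressed through antisymmetrized directional derivatives along constant vectors. -/
theorem discrete_flow_symplectic
    (n : ℕ) (Ld : (Fin n → ℝ) × (Fin n → ℝ) → ℝ) (hLd : ContDiff ℝ (⊤ : ℕ∞) Ld)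
    (hreg : ∀ a b : Fin n → ℝ, Function.Bijective
      (fun v : Fin n → ℝ =>
        fderiv ℝ (fun b' => fderiv ℝ (fun a' => Ld (a', b')) a) b v))
    (U : Set ((Fin n → ℝ) × (Fin n → ℝ))) (hU : IsOpen U)
    (Υ : (Fin n → ℝ) × (Fin n → ℝ) → (Fin n → ℝ) × (Fin n → ℝ))
    (hΥsmooth : ContDiffOn ℝ (⊤ : ℕ∞) Υ U)
    (hΥ1 : ∀ p ∈ U, (Υ p).1 = p.2)
    (hΥDEL : ∀ p ∈ U,
      fderiv ℝ (fun x => Ld (x, (Υ p).2)) p.2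
        + fderiv ℝ (fun y => Ld (p.1, y)) p.2 = 0) :
    let Θp : (Fin n → ℝ) × (Fin n → ℝ) → (Fin n → ℝ) × (Fin n → ℝ) → ℝ := fun z w =>
      fderiv ℝ (fun y => Ld (z.1, y)) z.2 w.2
    let Θm : (Fin n → ℝ) × (Fin n → ℝ) → (Fin n → ℝ) × (Fin n → ℝ) → ℝ := fun z w =>
      - fderiv ℝ (fun x => Ld (x, z.2)) z.1 w.1
    let Ω : (Fin n → ℝ) × (Fin n → ℝ) → (Fin n → ℝ) × (Fin n → ℝ)
        → (Fin n → ℝ) × (Fin n → ℝ) → ℝ := fun z u v =>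
      fderiv ℝ (fun w => Θp w v) z u - fderiv ℝ (fun w => Θp w u) z v
    -- `dΘ⁺ = dΘ⁻`
    (∀ (z u v : (Fin n → ℝ) × (Fin n → ℝ)),
      Ω z u v = fderiv ℝ (fun w => Θm w v) z u - fderiv ℝ (fun w => Θm w u) z v)
    ∧
    -- symplecticity of the discrete flow: `Υ_d* Ω_d = Ω_d` on `U`
    (∀ p ∈ U, ∀ u v : (Fin n → ℝ) × (Fin n → ℝ),
      Ω (Υ p) (fderiv ℝ Υ p u) (fderiv ℝ Υ p v) = Ω p u v) := by
  intro Θp Θm Ω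
  have hLd' : Differentiable ℝ Ld := hLd.differentiable (by simp)
  set D : (Fin n → ℝ) × (Fin n → ℝ) → ((Fin n → ℝ) × (Fin n → ℝ)) →L[ℝ] ℝ :=
    fderiv ℝ Ld with hDdef
  have hD : ContDiff ℝ (⊤ : ℕ∞) D := hLd.fderiv_right (by simp)
  have hD1 : Differentiable ℝ D := hD.differentiable (by simp)
  -- partial derivative identification
  have hA : ∀ z : (Fin n → ℝ) × (Fin n → ℝ),
      fderiv ℝ (fun x => Ld (x, z.2)) z.1
        = (D z).comp (ContinuousLinearMap.inl ℝ _ _) := by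
    intro z
    have h : HasFDerivAt (fun x => Ld (x, z.2))
        ((D z).comp (ContinuousLinearMap.inl ℝ _ _)) z.1 := by
      have h1 : HasFDerivAt Ld (D (z.1, z.2)) (z.1, z.2) := (hLd' _).hasFDerivAt
      have h2 := h1.comp z.1 (hasFDerivAt_prodMk_left (𝕜 := ℝ) z.1 z.2)
      exact h2
    exact h.fderiv
  have hB : ∀ z : (Fin n → ℝ) × (Fin n → ℝ),
      fderiv ℝ (fun y => Ld (z.1, y)) z.2
        = (D z).comp (ContinuousLinearMap.inr ℝ _ _) := by
    intro z
    have h : HasFDerivAt (fun y => Ld (z.1, y))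
        ((D z).comp (ContinuousLinearMap.inr ℝ _ _)) z.2 := by
      have h1 : HasFDerivAt Ld (D (z.1, z.2)) (z.1, z.2) := (hLd' _).hasFDerivAt
      have h2 := h1.comp z.2 (hasFDerivAt_prodMk_right (𝕜 := ℝ) z.1 z.2)
      exact h2
    exact h.fderiv
  have hΘp : ∀ w v : (Fin n → ℝ) × (Fin n → ℝ), Θp w v = D w (0, v.2) := by
    intro w v; simp only [Θp, hB w]; simp
  have hΘm : ∀ w v : (Fin n → ℝ) × (Fin n → ℝ), Θm w v = - D w (v.1, 0) := by
    intro w v; simp only [Θm, hA w]; simp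
  -- derivative of `w ↦ D w c`
  have key : ∀ (c z u : (Fin n → ℝ) × (Fin n → ℝ)),
      fderiv ℝ (fun w => D w c) z u = fderiv ℝ D z u c := by
    intro c z u
    have h := ((hD1 z).hasFDerivAt.clm_apply (hasFDerivAt_const c z)).fderiv
    rw [h]; simp
  have keyneg : ∀ (c z u : (Fin n → ℝ) × (Fin n → ℝ)),
      fderiv ℝ (fun w => - D w c) z u = - fderiv ℝ D z u c := by
    intro c z u
    have h := (((hD1 z).hasFDerivAt.clm_apply (hasFDerivAt_const c z)).neg).fderiv
    rw [show (fun w => - D w c) = -(fun y => D y c) from rfl, h]; simp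
  have hsym : ∀ z u v : (Fin n → ℝ) × (Fin n → ℝ),
      fderiv ℝ D z u v = fderiv ℝ D z v u := by
    intro z u v
    exact hLd.contDiffAt.isSymmSndFDerivAt (by rw [minSmoothness_of_isRCLikeNormedField]; exact ENat.LEInfty.out) u v
  have part1 : ∀ (z u v : (Fin n → ℝ) × (Fin n → ℝ)),
      Ω z u v = fderiv ℝ (fun w => Θm w v) z u - fderiv ℝ (fun w => Θm w u) z v := by
    intro z u v
    have e1 : (fun w => Θp w v) = fun w => D w (0, v.2) := funext fun w => hΘp w v
    have e2 : (fun w => Θp w u) = fun w => D w (0, u.2) := funext fun w => hΘp w u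
    have e3 : (fun w => Θm w v) = fun w => - D w (v.1, 0) := funext fun w => hΘm w v
    have e4 : (fun w => Θm w u) = fun w => - D w (u.1, 0) := funext fun w => hΘm w u
    simp only [Ω, e1, e2, e3, e4, key, keyneg]
    have hu : (u.1, (0 : Fin n → ℝ)) + ((0 : Fin n → ℝ), u.2) = u := by
      simp [Prod.ext_iff]
    have hv : (v.1, (0 : Fin n → ℝ)) + ((0 : Fin n → ℝ), v.2) = v := by
      simp [Prod.ext_iff]
    have h1 : fderiv ℝ D z u v = fderiv ℝ D z u (v.1, 0) + fderiv ℝ D z u (0, v.2) := by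
      conv_lhs => rw [← hv]
      rw [map_add]
    have h2 : fderiv ℝ D z v u = fderiv ℝ D z v (u.1, 0) + fderiv ℝ D z v (0, u.2) := by
      conv_lhs => rw [← hu]
      rw [map_add]
    have h3 := hsym z u v
    rw [h1, h2] at h3
    linarith
  refine ⟨part1, ?_⟩
  intro p hp u v
  have hΥd : DifferentiableAt ℝ Υ p :=
    (hΥsmooth.contDiffAt (hU.mem_nhds hp)).differentiableAt (by simp)
  -- first component of the derivative of the flow
  have hfst : ∀ w : (Fin n → ℝ) × (Fin n → ℝ), (fderiv ℝ Υ p w).1 = w.2 := by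
    intro w
    have h1 : (fun q => (Υ q).1) =ᶠ[nhds p] (fun q : (Fin n → ℝ) × (Fin n → ℝ) => q.2) :=
      Filter.eventuallyEq_of_mem (hU.mem_nhds hp) hΥ1
    have h3 : HasFDerivAt (fun q => (Υ q).1)
        ((ContinuousLinearMap.fst ℝ _ _).comp (fderiv ℝ Υ p)) p := by
      have := ((ContinuousLinearMap.fst ℝ (Fin n → ℝ) (Fin n → ℝ)).hasFDerivAt
        (x := Υ p)).comp p hΥd.hasFDerivAt
      simpa [Function.comp] using this
    have h4 : HasFDerivAt (fun q : (Fin n → ℝ) × (Fin n → ℝ) => q.2)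
        (ContinuousLinearMap.snd ℝ (Fin n → ℝ) (Fin n → ℝ)) p := hasFDerivAt_snd
    have := h3.fderiv.symm.trans ((h1.fderiv_eq).trans h4.fderiv)
    have := DFunLike.congr_fun this w
    simpa using this
  -- key identity from the discrete Euler-Lagrange equations
  have star : ∀ (c : Fin n → ℝ) (w : (Fin n → ℝ) × (Fin n → ℝ)),
      fderiv ℝ D (Υ p) (fderiv ℝ Υ p w) (c, 0) = - fderiv ℝ D p w (0, c) := by
    intro c w
    have hgh : ∀ q ∈ U, D (Υ q) ((c, 0) : (Fin n → ℝ) × (Fin n → ℝ))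
        = - D q (0, c) := by
      intro q hq
      have e1 : D (Υ q) ((c, 0) : (Fin n → ℝ) × (Fin n → ℝ))
          = fderiv ℝ (fun x => Ld (x, (Υ q).2)) (Υ q).1 c := by
        rw [hA]; simp
      have e2 : D q ((0, c) : (Fin n → ℝ) × (Fin n → ℝ))
          = fderiv ℝ (fun y => Ld (q.1, y)) q.2 c := by
        rw [hB]; simp
      rw [e1, e2, hΥ1 q hq]
      have h := hΥDEL q hq
      have h' := DFunLike.congr_fun h c
      simp only [ContinuousLinearMap.add_apply, ContinuousLinearMap.zero_apply] at h'
      linarith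
    have heq : (fun q => D (Υ q) ((c, 0) : (Fin n → ℝ) × (Fin n → ℝ)))
        =ᶠ[nhds p] fun q => - D q ((0, c) : (Fin n → ℝ) × (Fin n → ℝ)) :=
      Filter.eventuallyEq_of_mem (hU.mem_nhds hp) hgh
    -- derivative of LHS
    have hDΥ : HasFDerivAt (fun q => D (Υ q))
        ((fderiv ℝ D (Υ p)).comp (fderiv ℝ Υ p)) p := by
      have := ((hD1 (Υ p)).hasFDerivAt).comp p hΥd.hasFDerivAt
      exact this
    have hL : HasFDerivAt (fun q => D (Υ q) ((c, 0) : (Fin n → ℝ) × (Fin n → ℝ)))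
        (((D (Υ p)).comp (0 : ((Fin n → ℝ) × (Fin n → ℝ)) →L[ℝ] _))
          + ((fderiv ℝ D (Υ p)).comp (fderiv ℝ Υ p)).flip ((c, 0))) p :=
      hDΥ.clm_apply (hasFDerivAt_const _ p)
    have hR : HasFDerivAt (fun q => - D q ((0, c) : (Fin n → ℝ) × (Fin n → ℝ)))
        (-(((D p).comp (0 : ((Fin n → ℝ) × (Fin n → ℝ)) →L[ℝ] _))
          + (fderiv ℝ D p).flip ((0, c)))) p :=
      ((hD1 p).hasFDerivAt.clm_apply (hasFDerivAt_const _ p)).neg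
    have hfd := hL.fderiv.symm.trans ((heq.fderiv_eq).trans hR.fderiv)
    have := DFunLike.congr_fun hfd w
    simpa using this
  -- now compute both sides
  have e3 : (fun w => Θm w (fderiv ℝ Υ p v)) = fun w => - D w ((fderiv ℝ Υ p v).1, 0) :=
    funext fun w => hΘm w _
  have e4 : (fun w => Θm w (fderiv ℝ Υ p u)) = fun w => - D w ((fderiv ℝ Υ p u).1, 0) :=
    funext fun w => hΘm w _
  have e1 : (fun w => Θp w v) = fun w => D w (0, v.2) := funext fun w => hΘp w v
  have e2 : (fun w => Θp w u) = fun w => D w (0, u.2) := funext fun w => hΘp w u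
  rw [part1 (Υ p)]
  simp only [e1, e2, e3, e4, key, keyneg, Ω, hfst]
  rw [star v.2 u, star u.2 v]
  ring
end
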